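/- arXiv:math/0402046 — 2 statements merged into one kernel-verified Lean document; each statement's English description precedes it below -/
import Mathlib

section
/- Define on Conf(2,2) the function I(p₁,p₂;q₁,q₂) = (p₂ − p₁)(q₂ − q₁). Then: (i) I is invariant under the action of G³, i.e. I(g·c) = I(c) for every g ∈ G³ and c ∈ Conf(2,2); (ii) two configurations c, c′ ∈ Conf(2,2) lie in the same G³-orbit if and only if I(c) = I(c′); (iii) I takes every value in ℝ_{>0}. Consequently the quotient K(2,2) = Conf(2,2)/G³ is in bijection with ℝ_{>0}. -/
/-- A configuration in `Conf(2,2)`: points `p₁ < p₂` on the first line and `q₁ < q₂` on the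
second line, encoded as `((p₁, p₂), (q₁, q₂))`. -/
def Conf22 : Type := {c : (ℝ × ℝ) × (ℝ × ℝ) // c.1.1 < c.1.2 ∧ c.2.1 < c.2.2}

/-- The action of an element `(a, b, λ)` of `G³` on raw configuration data:
`p ↦ λp + a` on the first line and `q ↦ λ⁻¹q + b` on the second line. -/
noncomputable def g3Act (a b l : ℝ) (c : (ℝ × ℝ) × (ℝ × ℝ)) : (ℝ × ℝ) × (ℝ × ℝ) :=
  ((l * c.1.1 + a, l * c.1.2 + a), (l⁻¹ * c.2.1 + b, l⁻¹ * c.2.2 + b))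

/-- The invariant `I(p₁,p₂;q₁,q₂) = (p₂ − p₁)(q₂ − q₁)`. -/
def confInvariant (c : (ℝ × ℝ) × (ℝ × ℝ)) : ℝ := (c.1.2 - c.1.1) * (c.2.2 - c.2.1)

/-- Two configurations lie in the same `G³`-orbit. -/
def SameOrbit22 (c c' : Conf22) : Prop :=
  ∃ a b l : ℝ, 0 < l ∧ c'.val = g3Act a b l c.val

/-- On `Conf(2,2)`, the function `I(p₁,p₂;q₁,q₂) = (p₂−p₁)(q₂−q₁)`
satisfies: (i) `I` is invariant under the action of `G³`; (ii) two configurations lie in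
the same `G³`-orbit if and only if they have the same value of `I`; (iii) `I` takes every
value in `ℝ_{>0}`. Consequently the quotient `K(2,2) = Conf(2,2)/G³` is in bijection with
`ℝ_{>0}`. -/
theorem conf22_invariant_classifies_orbits :
    (∀ (a b l : ℝ), 0 < l → ∀ c : Conf22, confInvariant (g3Act a b l c.val) = confInvariant c.val) ∧
    (∀ c c' : Conf22, SameOrbit22 c c' ↔ confInvariant c.val = confInvariant c'.val) ∧
    (∀ r : ℝ, 0 < r → ∃ c : Conf22, confInvariant c.val = r) := by
  have inv : ∀ (a b l : ℝ), 0 < l → ∀ c : (ℝ×ℝ)×(ℝ×ℝ),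
      confInvariant (g3Act a b l c) = confInvariant c := by
    intro a b l hl c
    have hl' : l ≠ 0 := ne_of_gt hl
    simp only [confInvariant, g3Act]
    field_simp
    ring
  refine ⟨fun a b l hl c => inv a b l hl c.val, fun c c' => ?_, fun r hr => ?_⟩
  · constructor
    · rintro ⟨a, b, l, hl, h⟩
      rw [h, inv a b l hl]
    · intro h
      obtain ⟨⟨⟨p1, p2⟩, ⟨q1, q2⟩⟩, hp, hq⟩ := c
      obtain ⟨⟨⟨p1', p2'⟩, ⟨q1', q2'⟩⟩, hp', hq'⟩ := c'
      simp only [confInvariant] at h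
      have hd : (0:ℝ) < p2 - p1 := by linarith
      have hd' : (0:ℝ) < p2' - p1' := by linarith
      set l := (p2' - p1') / (p2 - p1) with hldef
      have hl : 0 < l := div_pos hd' hd
      refine ⟨p1' - l * p1, q1' - l⁻¹ * q1, l, hl, ?_⟩
      have hlne : l ≠ 0 := ne_of_gt hl
      simp only [g3Act, Prod.mk.injEq]
      have h1 : l * p2 + (p1' - l * p1) = p2' := by
        have : l * (p2 - p1) = p2' - p1' := by
          rw [hldef]; field_simp
        linarith [this]
      have h2 : l⁻¹ * q2 + (q1' - l⁻¹ * q1) = q2' := by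
        have : l⁻¹ * (q2 - q1) = q2' - q1' := by
          rw [hldef, inv_div]
          rw [div_mul_eq_mul_div, div_eq_iff (ne_of_gt hd')]
          nlinarith [h]
        linarith [this]
      refine ⟨⟨by ring, by linarith⟩, by ring, by linarith⟩
  · exact ⟨⟨((0, 1), (0, r)), by norm_num, hr⟩, by simp [confInvariant]⟩
end

section
/- Let m, n ≥ 2. Two configurations (p₁,…,p_m;q₁,…,q_n) and (p′₁,…,p′_m;q′₁,…,q′_n) in Conf(m,n) lie in the same G³-orbit if and only if (p_j − p_i)(q_l − q_k) = (p′_j − p′_i)(q′_l − q′_k) for all 1 ≤ i < j ≤ m and 1 ≤ k < l ≤ n. -/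
/-- Let `m, n ≥ 2`. Two configurations `(p₁,…,p_m; q₁,…,q_n)` and
`(p′₁,…,p′_m; q′₁,…,q′_n)` in `Conf(m,n)` (strictly increasing tuples on each of the two
lines) lie in the same `G³`-orbit — i.e. `p′ᵢ = λpᵢ + a` and `q′ⱼ = λ⁻¹qⱼ + b` for some
`a, b ∈ ℝ`, `λ > 0` — if and only if `(p_j − p_i)(q_l − q_k) = (p′_j − p′_i)(q′_l − q′_k)`
for all `1 ≤ i < j ≤ m` and `1 ≤ k < l ≤ n`. -/
theorem conf_same_orbit_iff_four_point_ratios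
    (m n : ℕ) (hm : 2 ≤ m) (hn : 2 ≤ n)
    (p p' : Fin m → ℝ) (q q' : Fin n → ℝ)
    (hp : StrictMono p) (hp' : StrictMono p') (hq : StrictMono q) (hq' : StrictMono q') :
    (∃ a b l : ℝ, 0 < l ∧ (∀ i, p' i = l * p i + a) ∧ (∀ j, q' j = l⁻¹ * q j + b)) ↔
      (∀ (i j : Fin m) (k l : Fin n), i < j → k < l →
        (p j - p i) * (q l - q k) = (p' j - p' i) * (q' l - q' k)) := by
  constructor
  · rintro ⟨a, b, l, hl, hP, hQ⟩ i j k kk hij hkl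
    rw [hP, hP, hQ, hQ]
    have hl0 : l ≠ 0 := ne_of_gt hl
    field_simp
    ring
  · intro h
    set i0 : Fin m := ⟨0, by omega⟩
    set i1 : Fin m := ⟨1, by omega⟩
    set k0 : Fin n := ⟨0, by omega⟩
    set k1 : Fin n := ⟨1, by omega⟩
    have hi01 : i0 < i1 := by simp [i0, i1, Fin.lt_def]
    have hk01 : k0 < k1 := by simp [k0, k1, Fin.lt_def]
    have hdp : 0 < p i1 - p i0 := sub_pos.mpr (hp hi01)
    have hdp' : 0 < p' i1 - p' i0 := sub_pos.mpr (hp' hi01)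
    have hdq : 0 < q k1 - q k0 := sub_pos.mpr (hq hk01)
    have hdq' : 0 < q' k1 - q' k0 := sub_pos.mpr (hq' hk01)
    set L : ℝ := (p' i1 - p' i0) / (p i1 - p i0) with hL
    have hLpos : 0 < L := div_pos hdp' hdp
    have hbase := h i0 i1 k0 k1 hi01 hk01
    have keyP : ∀ i, p' i - p' i0 = L * (p i - p i0) := by
      intro i
      rcases eq_or_lt_of_le (Nat.zero_le i.1) with hi | hi
      · have : i = i0 := Fin.ext hi.symm
        simp [this]
      · have hii : i0 < i := hi
        have hi' := h i0 i k0 k1 hii hk01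
        -- (p i - p i0) * dq = (p' i - p' i0) * dq', dq' = dq * dp / dp'
        have hdq'eq : q' k1 - q' k0 = (p i1 - p i0) * (q k1 - q k0) / (p' i1 - p' i0) := by
          field_simp
          linarith [hbase]
        rw [hdq'eq] at hi'
        rw [hL]
        field_simp at hi' ⊢
        nlinarith [hi', hdq, hdp, hdp', mul_pos hdq (sub_pos.mpr (hp' hii))]
    have keyQ : ∀ k, q' k - q' k0 = L⁻¹ * (q k - q k0) := by
      intro k
      rcases eq_or_lt_of_le (Nat.zero_le k.1) with hk | hk
      · have : k = k0 := Fin.ext hk.symm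
        simp [this]
      · have hkk : k0 < k := hk
        have hk' := h i0 i1 k0 k hi01 hkk
        rw [hL, inv_div]
        field_simp at hk' ⊢
        nlinarith [hk', hdp, hdp', hdq]
    refine ⟨p' i0 - L * p i0, q' k0 - L⁻¹ * q k0, L, hLpos, ?_, ?_⟩
    · intro i; linarith [keyP i]
    · intro k; linarith [keyQ k]
end
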